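/- For every integer l ≥ 0, ∫₀^π P_{2l+1}(cos θ) · cos θ dθ = π · Σ_{m=0}^{l} (−1)^m · (4l+2−2m)! / ( 2^{2(2l+1−m)} · m! · (2l+1−m)! · (l−m)! · (l+1−m)! ), where P_{2l+1} is the Legendre polynomial of degree 2l+1; in particular this integral is a nonzero rational multiple of π. -/

import Mathlib

open Real

noncomputable section

/-- The `n`-th Legendre polynomial, via Rodrigues' formula
`P_n(x) = 1/(2ⁿ n!) dⁿ/dxⁿ [(x² − 1)ⁿ]`. -/
def legendreP (n : ℕ) (x : ℝ) : ℝ :=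
  (1 / ((2 : ℝ) ^ n * (n.factorial : ℝ))) * iteratedDeriv n (fun t : ℝ => (t ^ 2 - 1) ^ n) x

/-!
Expanding Rodrigues' formula gives `P_n(x) = 2⁻ⁿ Σₘ (-1)ᵐ C(n, m) C(2(n - m), n) x^(n - 2m)`, and
Wallis' formula `∫₀^π cos^(2k) = π C(2k, k) / 4ᵏ` integrates `P_{2l+1}(cos θ) cos θ` term by term
into the stated sum. The WZ method evaluates that sum as `C(2l, l) C(2l + 2, l + 1) / 4^(2l+1)`:
passing from `l` to `l + 1` multiplies each summand by the ratio of consecutive closed forms up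
to a telescoping difference. The closed form is positive, so the integral is a nonzero rational
multiple of `π`.
-/

open Finset Polynomial
open scoped Nat

theorem cast_centralBinom_succ (n : ℕ) :
    ((n + 1).centralBinom : ℝ) = 2 * (2 * n + 1) / (n + 1) * n.centralBinom := by
  rw [div_mul_eq_mul_div, eq_div_iff (by positivity), mul_comm]
  exact_mod_cast Nat.succ_mul_centralBinom_succ n

theorem integral_cos_pow_two_mul (k : ℕ) :
    ∫ θ in (0 : ℝ)..π, cos θ ^ (2 * k) = π * k.centralBinom / 4 ^ k := by
  induction k with
  | zero => simp
  | succ k ih =>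
    rw [mul_add_one, integral_cos_pow, ih, sin_pi, sin_zero, cast_centralBinom_succ]
    push_cast
    field_simp
    ring

theorem iteratedDeriv_polynomial_eval {𝕜 : Type*} [NontriviallyNormedField 𝕜] (n : ℕ)
    (p : 𝕜[X]) :
    iteratedDeriv n (fun x => p.eval x) = fun x => (derivative^[n] p).eval x := by
  induction n generalizing p with
  | zero => simp
  | succ n ih =>
    have hderiv : deriv (fun x => p.eval x) = fun x => (derivative p).eval x :=
      funext fun x => Polynomial.deriv p
    rw [iteratedDeriv_succ', hderiv, ih, Function.iterate_succ_apply]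

/-- For `2m > n` the exponent `2(n - m) - n` is truncated, but then `C(2(n - m), n) = 0`. -/
theorem legendreP_eq_sum (n : ℕ) (x : ℝ) :
    legendreP n x = ∑ m ∈ range (n + 1),
      (-1) ^ m * n.choose m * (2 * (n - m)).choose n / 2 ^ n * x ^ (2 * (n - m) - n) := by
  have hpoly : (fun t : ℝ => (t ^ 2 - 1) ^ n) = fun t => ((-1 + X ^ 2 : ℝ[X]) ^ n).eval t := by
    funext t; simp [neg_add_eq_sub]
  rw [legendreP, hpoly, iteratedDeriv_polynomial_eval, add_pow]
  simp only [iterate_derivative_sum, eval_finsetSum, mul_sum]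
  refine sum_congr rfl fun m _ => ?_
  have hterm : ((-1 : ℝ[X]) ^ m * (X ^ 2) ^ (n - m) * (n.choose m : ℝ[X])) =
      C ((-1 : ℝ) ^ m * n.choose m) * X ^ (2 * (n - m)) := by
    simp only [C_mul, C_pow, C_neg, C_1, C_eq_natCast, ← pow_mul]; ring
  rw [hterm, iterate_derivative_C_mul, iterate_derivative_X_pow_eq_smul]
  simp only [eval_mul, eval_C, eval_smul, eval_pow, eval_X, smul_eq_mul,
    Nat.descFactorial_eq_factorial_mul_choose]
  push_cast
  field_simp

theorem integral_legendreP_odd_mul_cos (l : ℕ) :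
    ∫ θ in (0 : ℝ)..π, legendreP (2 * l + 1) (cos θ) * cos θ =
      π * ∑ m ∈ range (l + 1), (-1 : ℝ) ^ m * (2 * l + 1).choose m *
        (2 * (2 * l + 1 - m)).choose (2 * l + 1) / 2 ^ (2 * l + 1) *
          (l + 1 - m).centralBinom / 4 ^ (l + 1 - m) := by
  simp only [legendreP_eq_sum, sum_mul, mul_assoc, ← pow_succ]
  rw [intervalIntegral.integral_finsetSum fun m _ => by
    apply Continuous.intervalIntegrable; fun_prop]
  simp only [intervalIntegral.integral_const_mul]
  rw [← sum_subset (range_subset_range.2 (by omega : l + 1 ≤ 2 * l + 1 + 1)) ?_, mul_sum]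
  · refine sum_congr rfl fun m hm => ?_
    have hexp : 2 * (2 * l + 1 - m) - (2 * l + 1) + 1 = 2 * (l + 1 - m) := by
      have := mem_range.1 hm; omega
    rw [hexp, integral_cos_pow_two_mul]
    ring
  · intro m _ hm
    rw [Nat.choose_eq_zero_of_lt (n := 2 * (2 * l + 1 - m)) (by simp at hm; omega)]
    simp

/-- The summand of the theorem at `m` for `l = m + a`, free of truncated subtractions. -/
def legendreCosTerm (m a : ℕ) : ℝ :=
  (-1) ^ m * (2 * m + 4 * a + 2)! / (4 ^ (m + 2 * a + 1) * m ! * (m + 2 * a + 1)! * a ! * (a + 1)!)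

theorem legendreCosTerm_sub_eq_choose {l m : ℕ} (h : m ≤ l) :
    legendreCosTerm m (l - m) = (-1 : ℝ) ^ m * (2 * l + 1).choose m *
        (2 * (2 * l + 1 - m)).choose (2 * l + 1) / 2 ^ (2 * l + 1) *
          (l + 1 - m).centralBinom / 4 ^ (l + 1 - m) := by
  obtain ⟨a, rfl⟩ := Nat.exists_eq_add_of_le h
  rw [Nat.centralBinom_eq_two_mul_choose, Nat.cast_choose ℝ (by omega),
    Nat.cast_choose ℝ (by omega), Nat.cast_choose ℝ (by omega)]
  rw [show m + a - m = a by omega, show 2 * (m + a) + 1 - m = m + 2 * a + 1 by omega,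
    show 2 * (m + 2 * a + 1) - (2 * (m + a) + 1) = 2 * a + 1 by omega,
    show m + a + 1 - m = a + 1 by omega, show 2 * (a + 1) - (a + 1) = a + 1 by omega,
    show 2 * (a + 1) = 2 * a + 1 + 1 by ring, show 2 * (m + 2 * a + 1) = 2 * m + 4 * a + 2 by ring]
  simp only [legendreCosTerm, Nat.factorial_succ, pow_succ, pow_mul]
  push_cast
  field_simp
  ring

theorem legendreCosTerm_sub_eq_factorial {l m : ℕ} (h : m ≤ l) :
    legendreCosTerm m (l - m) = (-1 : ℝ) ^ m * ((4 * l + 2 - 2 * m).factorial : ℝ) /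
          ((2 : ℝ) ^ (2 * (2 * l + 1 - m)) * (m.factorial : ℝ) *
            (((2 * l + 1 - m).factorial : ℝ)) * (((l - m).factorial : ℝ)) *
            (((l + 1 - m).factorial : ℝ))) := by
  obtain ⟨a, rfl⟩ := Nat.exists_eq_add_of_le h
  rw [show m + a - m = a by omega, show 4 * (m + a) + 2 - 2 * m = 2 * m + 4 * a + 2 by omega,
    show 2 * (m + a) + 1 - m = m + 2 * a + 1 by omega, show m + a + 1 - m = a + 1 by omega,
    pow_mul]
  norm_num [legendreCosTerm]

/-- The WZ certificate of `legendreCosTerm` (from Gosper's algorithm), indexed by `m` and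
`b = l + 1 - m`. -/
def legendreCosCert (m b : ℕ) : ℝ :=
  (-1) ^ (m + 1) * m * (2 * m + 4 * b + 2) * (2 * m + 4 * b)! *
      (2 * m ^ 2 + 8 * m * b + 6 * b ^ 2 + 3 * m + 4 * b + 1) /
    (4 ^ (m + 2 * b + 1) * m ! * (m + 2 * b + 1)! * b ! * (b + 1)! * (m + b) * (m + b + 1))

theorem legendreCosCert_zero_left (b : ℕ) : legendreCosCert 0 b = 0 := by
  simp [legendreCosCert]

theorem legendreCosTerm_succ_zero (m : ℕ) :
    legendreCosTerm (m + 1) 0 = -legendreCosCert (m + 1) 0 := by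
  simp only [legendreCosTerm, legendreCosCert, mul_zero, add_zero, Nat.factorial_succ, pow_succ]
  push_cast
  field_simp
  ring

theorem legendreCosTerm_succ_right_sub (m a : ℕ) :
    legendreCosTerm m (a + 1) -
        (2 * (m + a) + 1) * (2 * (m + a) + 3) / (4 * (m + a + 1) * (m + a + 2)) *
          legendreCosTerm m a =
      legendreCosCert (m + 1) a - legendreCosCert m (a + 1) := by
  simp only [legendreCosTerm, legendreCosCert, mul_add_one, ← add_assoc]
  rw [show 2 * m + 2 + 4 * a = 2 * m + 4 * a + 1 + 1 by ring,
    show m + 1 + 2 * a = m + 2 * a + 1 by ring]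
  simp only [Nat.factorial_succ]
  push_cast
  field_simp
  ring

theorem sum_antidiagonal_sub_succ {M : Type*} [AddCommGroup M] (f : ℕ → ℕ → M) (n : ℕ) :
    ∑ p ∈ antidiagonal n, (f (p.1 + 1) p.2 - f p.1 (p.2 + 1)) = f (n + 1) 0 - f 0 (n + 1) := by
  have h := (Nat.sum_antidiagonal_succ (n := n) (f := fun p => f p.1 p.2)).symm.trans
    (Nat.sum_antidiagonal_succ' (n := n) (f := fun p => f p.1 p.2))
  rw [sum_sub_distrib, sub_eq_sub_iff_add_eq_add, add_comm]
  exact h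

theorem sum_antidiagonal_legendreCosTerm (l : ℕ) :
    ∑ p ∈ antidiagonal l, legendreCosTerm p.1 p.2 =
      l.centralBinom * (l + 1).centralBinom / 4 ^ (2 * l + 1) := by
  induction l with
  | zero => norm_num [legendreCosTerm, Nat.centralBinom, Nat.choose]
  | succ l ih =>
    have hstep : ∀ p ∈ antidiagonal l, legendreCosTerm p.1 (p.2 + 1) =
        (2 * l + 1) * (2 * l + 3) / (4 * (l + 1) * (l + 2)) * legendreCosTerm p.1 p.2 +
          (legendreCosCert (p.1 + 1) p.2 - legendreCosCert p.1 (p.2 + 1)) := by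
      intro p hp
      rw [HasAntidiagonal.mem_antidiagonal] at hp
      rw [← legendreCosTerm_succ_right_sub, ← hp]
      push_cast
      ring
    rw [Nat.sum_antidiagonal_succ', sum_congr rfl hstep, sum_add_distrib, ← mul_sum, ih,
      sum_antidiagonal_sub_succ, legendreCosTerm_succ_zero, legendreCosCert_zero_left,
      cast_centralBinom_succ (l + 1), cast_centralBinom_succ l]
    push_cast
    field_simp
    ring

/-- For every `l ≥ 0`, `∫₀^π P_{2l+1}(cos θ) cos θ dθ` equals the explicit finite sum
`π Σ_{m=0}^{l} (−1)^m (4l+2−2m)! / (2^{2(2l+1−m)} m! (2l+1−m)! (l−m)! (l+1−m)!)`;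
in particular it is a nonzero rational multiple of `π`. -/
theorem integral_legendre_odd_cos (l : ℕ) :
    (∫ θ in (0 : ℝ)..π, legendreP (2 * l + 1) (Real.cos θ) * Real.cos θ) =
      π * ∑ m ∈ Finset.range (l + 1),
        (-1 : ℝ) ^ m * ((4 * l + 2 - 2 * m).factorial : ℝ) /
          ((2 : ℝ) ^ (2 * (2 * l + 1 - m)) * (m.factorial : ℝ) *
            (((2 * l + 1 - m).factorial : ℝ)) * (((l - m).factorial : ℝ)) *
            (((l + 1 - m).factorial : ℝ))) ∧
    ∃ q : ℚ, q ≠ 0 ∧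
      (∫ θ in (0 : ℝ)..π, legendreP (2 * l + 1) (Real.cos θ) * Real.cos θ) = (q : ℝ) * π := by
  have hterms := Nat.sum_antidiagonal_eq_sum_range_succ legendreCosTerm l
  have hintegral : ∫ θ in (0 : ℝ)..π, legendreP (2 * l + 1) (cos θ) * cos θ =
      π * ∑ p ∈ antidiagonal l, legendreCosTerm p.1 p.2 := by
    rw [integral_legendreP_odd_mul_cos, hterms]
    exact congrArg _ (sum_congr rfl fun m hm =>
      (legendreCosTerm_sub_eq_choose (Nat.lt_succ_iff.1 (mem_range.1 hm))).symm)
  refine ⟨?_, l.centralBinom * (l + 1).centralBinom / 4 ^ (2 * l + 1), ?_, ?_⟩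
  · rw [hintegral, hterms]
    exact congrArg _ (sum_congr rfl fun m hm =>
      legendreCosTerm_sub_eq_factorial (Nat.lt_succ_iff.1 (mem_range.1 hm)))
  · positivity [Nat.centralBinom_pos l, Nat.centralBinom_pos (l + 1)]
  · rw [hintegral, sum_antidiagonal_legendreCosTerm]
    push_cast
    ring
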